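/- For every s ∈ ℝ^{d-1}, t₁' ∈ ℝ, t̃' ∈ ℝ^{d-1}, the conjugation identity T_s σ(t₁', t̃') T_sᵀ = σ(t₁' + sᵀt̃', T_{[s]} t̃') holds, where [s] = (s_1,...,s_{d-2}). -/
import Mathlib


open Finset Matrix

/-- Unit upper triangular Toeplitz matrix: diagonal entries `1` and entry `(i, i+k)`
equal to `s k` for `k = 1, …, d-1`.  (The `(d-1)×(d-1)` Toeplitz matrix `T_{[s]}`
of the truncated vector `[s]` is then `toeplitz (d-1) s`.) -/
def toeplitz (d : ℕ) (s : ℕ → ℝ) : Matrix (Fin d) (Fin d) ℝ :=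
  Matrix.of fun i j =>
    if (i : ℕ) = (j : ℕ) then 1 else if (i : ℕ) < (j : ℕ) then s ((j : ℕ) - (i : ℕ)) else 0

/-- `σ(t₁,t̃) = [[t₁, (1/2)t̃ᵀ], [(1/2)t̃, 0]]` as a `d×d` matrix, where the
entries of `t̃` are `tt 1, …, tt (d-1)`. -/
noncomputable def sig (d : ℕ) (t₁ : ℝ) (tt : ℕ → ℝ) : Matrix (Fin d) (Fin d) ℝ :=
  Matrix.of fun i j =>
    if (i : ℕ) = 0 ∧ (j : ℕ) = 0 then t₁
    else if (i : ℕ) = 0 then (1 / 2) * tt (j : ℕ)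
    else if (j : ℕ) = 0 then (1 / 2) * tt (i : ℕ)
    else 0

/-- The conjugation identity `T_s σ(t₁', t̃') T_sᵀ = σ(t₁' + sᵀt̃', T_{[s]} t̃')`,
where `sᵀt̃' = ∑_{k=1}^{d-1} s_k t̃'_k` and `(T_{[s]} t̃')_k = t̃'_k + ∑_{j>k} s_{j-k} t̃'_j`. -/
theorem toeplitz_conj_sig (d : ℕ) (s tt : ℕ → ℝ) (t₁ : ℝ) :
    toeplitz d s * sig d t₁ tt * (toeplitz d s)ᵀ =
      sig d (t₁ + ∑ k ∈ Finset.Icc 1 (d - 1), s k * tt k)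
        (fun k => tt k + ∑ j ∈ Finset.Ioc k (d - 1), s (j - k) * tt j) := by
  rcases Nat.eq_zero_or_pos d with hd | hd
  · subst hd; ext i j; exact i.elim0
  -- the vector u and w = T u
  set u : ℕ → ℝ := fun x => if x = 0 then t₁ else tt x with hu
  set W : ℕ → ℝ := fun x => u x + ∑ n ∈ Finset.Ioc x (d-1), s (n - x) * tt n with hW
  have hsig : ∀ (a : ℝ) (b : ℕ → ℝ) (i j : Fin d),
      sig d a b i j = 1/2 * ((if (i:ℕ) = 0 then (if (j:ℕ) = 0 then a else b j) else 0)
        + (if (j:ℕ) = 0 then (if (i:ℕ) = 0 then a else b i) else 0)) := by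
    intro a b i j
    simp only [sig, of_apply]
    split_ifs <;> (first | ring1 | (exfalso; omega))
  have hIoc : ∀ x : ℕ, x < d → (Finset.range d).filter (fun n => x < n) = Finset.Ioc x (d-1) := by
    intro x hx
    ext n
    simp only [Finset.mem_filter, Finset.mem_range, Finset.mem_Ioc]
    omega
  have key : ∀ x : Fin d, (∑ l : Fin d, toeplitz d s x l * u l) = W x := by
    intro x
    have step : ∀ l : Fin d, toeplitz d s x l * u l =
        (if (x:ℕ) = (l:ℕ) then u l else 0) + (if (x:ℕ) < (l:ℕ) then s ((l:ℕ) - (x:ℕ)) * u (l:ℕ) else 0) := by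
      intro l
      simp only [toeplitz, of_apply]
      split_ifs with h1 h2 <;> (first | ring1 | (exfalso; omega))
    rw [Finset.sum_congr rfl fun l _ => step l, Finset.sum_add_distrib]
    have e1 : (∑ l : Fin d, if (x:ℕ) = (l:ℕ) then u l else 0) = u x := by
      simp only [Fin.val_eq_val]
      simp
    have e2 : (∑ l : Fin d, if (x:ℕ) < (l:ℕ) then s ((l:ℕ) - (x:ℕ)) * u (l:ℕ) else 0)
        = ∑ n ∈ Finset.Ioc (x:ℕ) (d-1), s (n - x) * tt n := by
      rw [Fin.sum_univ_eq_sum_range (fun n => if (x:ℕ) < n then s (n - (x:ℕ)) * u n else 0) d]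
      rw [← Finset.sum_filter, hIoc x x.2]
      refine Finset.sum_congr rfl fun n hn => ?_
      simp only [Finset.mem_Ioc] at hn
      have : n ≠ 0 := by omega
      simp [hu, this]
    rw [e1, e2, hW]
  have hzero : (⟨0, hd⟩ : Fin d) = ⟨0, hd⟩ := rfl
  have hT0 : ∀ i : Fin d, toeplitz d s i ⟨0, hd⟩ = if (i:ℕ) = 0 then 1 else 0 := by
    intro i
    simp only [toeplitz, of_apply]
    split_ifs <;> first | rfl | omega
  ext i j
  rw [mul_apply]
  have inner : ∀ l : Fin d, (toeplitz d s * sig d t₁ tt) i l =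
      1/2 * ((if (i:ℕ) = 0 then u l else 0) + (if (l:ℕ) = 0 then W i else 0)) := by
    intro l
    rw [mul_apply]
    have step : ∀ k : Fin d, toeplitz d s i k * sig d t₁ tt k l =
        (if (i:ℕ) = 0 ∧ (k:ℕ) = 0 then 1/2 * u l else 0)
        + (if (l:ℕ) = 0 then toeplitz d s i k * (1/2 * u k) else 0) := by
      intro k
      rw [hsig]
      simp only [toeplitz, of_apply, hu]
      split_ifs <;> (first | ring1 | (exfalso; omega))
    rw [Finset.sum_congr rfl fun k _ => step k, Finset.sum_add_distrib]
    have e1 : (∑ k : Fin d, if (i:ℕ) = 0 ∧ (k:ℕ) = 0 then 1/2 * u l else 0)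
        = if (i:ℕ) = 0 then 1/2 * u l else 0 := by
      rw [Finset.sum_eq_single (⟨0, hd⟩ : Fin d)]
      · simp
      · intro b _ hb
        have : (b:ℕ) ≠ 0 := fun h => hb (Fin.ext h)
        simp [this]
      · simp
    have e2 : (∑ k : Fin d, if (l:ℕ) = 0 then toeplitz d s i k * (1/2 * u k) else 0)
        = if (l:ℕ) = 0 then 1/2 * W i else 0 := by
      split_ifs with h
      · have hh : ∀ k : Fin d, toeplitz d s i k * (1/2 * u (k:ℕ))
            = 1/2 * (toeplitz d s i k * u (k:ℕ)) := fun k => by ring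
        rw [Finset.sum_congr rfl fun k _ => hh k, ← Finset.mul_sum, key i]
      · simp
    rw [e1, e2]
    split_ifs <;> ring
  have hW0 : W 0 = t₁ + ∑ k ∈ Finset.Icc 1 (d - 1), s k * tt k := by
    rw [show Finset.Icc 1 (d-1) = Finset.Ioc 0 (d-1) from Finset.Icc_add_one_left_eq_Ioc 0 (d-1)]
    simp [hW, hu]
  have hWt : ∀ n : ℕ, n ≠ 0 → W n = tt n + ∑ j ∈ Finset.Ioc n (d - 1), s (j - n) * tt j := by
    intro n h
    simp [hW, hu, h]
  rw [Finset.sum_congr rfl fun l _ => by rw [inner, transpose_apply]]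
  have step2 : ∀ l : Fin d,
      1/2 * ((if (i:ℕ) = 0 then u (l:ℕ) else 0) + (if (l:ℕ) = 0 then W i else 0)) * toeplitz d s j l
      = (if (i:ℕ) = 0 then 1/2 * (toeplitz d s j l * u (l:ℕ)) else 0)
        + (if (l:ℕ) = 0 then 1/2 * W i * toeplitz d s j l else 0) := by
    intro l
    split_ifs <;> ring1
  rw [Finset.sum_congr rfl fun l _ => step2 l, Finset.sum_add_distrib]
  have s1 : (∑ l : Fin d, if (i:ℕ) = 0 then 1/2 * (toeplitz d s j l * u (l:ℕ)) else 0)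
      = if (i:ℕ) = 0 then 1/2 * W j else 0 := by
    by_cases h : (i:ℕ) = 0
    · simp only [if_pos h]
      rw [← Finset.mul_sum, key j]
    · simp only [if_neg h, Finset.sum_const_zero]
  have s2 : (∑ l : Fin d, if (l:ℕ) = 0 then 1/2 * W i * toeplitz d s j l else 0)
      = if (j:ℕ) = 0 then 1/2 * W i else 0 := by
    rw [Finset.sum_eq_single (⟨0, hd⟩ : Fin d)]
    · rw [if_pos rfl, hT0]
      split_ifs <;> ring1
    · intro b _ hb
      have : (b:ℕ) ≠ 0 := fun h => hb (Fin.ext h)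
      simp [this]
    · simp
  rw [s1, s2, hsig]
  by_cases h1 : (i:ℕ) = 0 <;> by_cases h2 : (j:ℕ) = 0 <;>
      simp only [h1, h2, if_pos, if_neg, ite_true, ite_false, not_false_iff, if_true, if_false]
  · rw [hW0]; ring1
  · rw [hWt (j:ℕ) h2]; ring1
  · rw [hWt (i:ℕ) h1]; ring1
  · ring1
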